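/- Discrete-time valuation with monotone decreasing payoff: under the same backward recursion with holder maximization, q*₋(nε) = ν( x*_{T-nε} + (σ²/2 - |α - σ²/2|)·nε , σ²·nε ) for all n ≥ 0. -/

import Mathlib

open MeasureTheory

/-- Gaussian smoothing of the payoff `f` in log-coordinates, extended to variance `0`. -/
noncomputable def nu (f : ℝ → ℝ) (z s : ℝ) : ℝ :=
  if s = 0 then f (Real.exp z)
  else (Real.sqrt (2 * Real.pi * s))⁻¹ *
    ∫ x : ℝ, f (Real.exp x) * Real.exp (-(x - z + s/2)^2 / (2*s))

/-!
`nu f z s` is the expectation of `f ∘ exp` under the normal law with mean `z - s / 2` and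
variance `s`. One step of the recursion integrates `nu f (z ± u) s` against a normal law of
variance `σ²ε` and mean `(α - σ²/2)ε`; since normal laws convolve to normal laws, both branches
are again values of `nu f · (s + σ²ε)`, at `z + σ²ε/2 ± (α - σ²/2)ε`. For decreasing `f` the map
`nu f · s` is decreasing, so the maximum is attained at the smaller point
`z + σ²ε/2 - |α - σ²/2|ε`, and induction on `n` gives the formula.
-/

open Real ProbabilityTheory
open scoped NNReal

section Gaussian

variable {g : ℝ → ℝ} {m : ℝ}

lemma integral_gaussianReal_toNNReal {v : ℝ} (hv : 0 < v) :
    ∫ u, g u ∂gaussianReal m v.toNNReal =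
      (√(2 * π * v))⁻¹ * ∫ u, g u * exp (-(u - m) ^ 2 / (2 * v)) := by
  rw [integral_gaussianReal_eq_integral_smul (by simpa using hv), ← integral_const_mul]
  simp only [gaussianPDFReal, smul_eq_mul, Real.coe_toNNReal _ hv.le]
  congr 1 with u
  ring

lemma integrable_gaussianReal_toNNReal_iff {v : ℝ} (hv : 0 < v) :
    Integrable g (gaussianReal m v.toNNReal) ↔
      Integrable (fun u ↦ g u * exp (-(u - m) ^ 2 / (2 * v))) := by
  rw [gaussianReal_of_var_ne_zero _ (by simpa using hv),
    integrable_withDensity_iff_integrable_smul' (measurable_gaussianPDF _ _)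
      (ae_of_all _ fun _ ↦ gaussianPDF_lt_top)]
  simp only [toReal_gaussianPDF, gaussianPDFReal, Real.coe_toNNReal _ hv.le, smul_eq_mul,
    mul_assoc]
  rw [integrable_const_mul_iff (inv_pos.2 (by positivity)).ne'.isUnit]
  simp_rw [mul_comm]

lemma integral_comp_neg_gaussianReal {v : ℝ≥0} :
    ∫ u, g (-u) ∂gaussianReal m v = ∫ u, g u ∂gaussianReal (-m) v := by
  rw [← gaussianReal_map_neg]
  exact (integral_map_equiv (MeasurableEquiv.neg ℝ) g).symm

lemma integral_integral_gaussianReal_add_mean {m₁ m₂ : ℝ} {v₁ v₂ : ℝ≥0}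
    (hg : Integrable g (gaussianReal (m₁ + m₂) (v₁ + v₂))) :
    ∫ u, (∫ x, g x ∂gaussianReal (m₁ + u) v₁) ∂gaussianReal m₂ v₂ =
      ∫ x, g x ∂gaussianReal (m₁ + m₂) (v₁ + v₂) := by
  rw [add_comm m₁, add_comm v₁, ← gaussianReal_conv_gaussianReal] at *
  rw [integral_conv hg]
  congr 1 with u
  rw [← gaussianReal_map_const_add]
  exact integral_map_equiv (MeasurableEquiv.addLeft u) g

lemma antitone_integral_gaussianReal_mean {v : ℝ≥0} (hg : Antitone g)
    (hint : ∀ m, Integrable g (gaussianReal m v)) :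
    Antitone fun m ↦ ∫ x, g x ∂gaussianReal m v := by
  intro m₁ m₂ hm
  have hmap : (gaussianReal m₁ v).map (MeasurableEquiv.addRight (m₂ - m₁)) =
      gaussianReal m₂ v := by
    have h := gaussianReal_map_add_const (μ := m₁) (v := v) (m₂ - m₁)
    rwa [add_sub_cancel] at h
  have hint_shift := hint m₂
  rw [← hmap, integrable_map_equiv] at hint_shift
  dsimp only
  rw [← hmap, integral_map_equiv]
  exact integral_mono hint_shift (hint m₁) fun x ↦ hg (by simpa using hm)

end Gaussian

lemma Antitone.max_apply_add_apply_sub {φ : ℝ → ℝ} (hφ : Antitone φ) (a b : ℝ) :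
    max (φ (a + b)) (φ (a - b)) = φ (a - |b|) := by
  rcases le_total 0 b with hb | hb
  · rw [abs_of_nonneg hb, max_eq_right (hφ (by linarith))]
  · rw [abs_of_nonpos hb, sub_neg_eq_add, max_eq_left (hφ (by linarith))]

section Nu

variable {f : ℝ → ℝ} {s : ℝ}

lemma nu_eq_integral_gaussianReal (hs : 0 ≤ s) (z : ℝ) :
    nu f z s = ∫ x, f (exp x) ∂gaussianReal (z - s / 2) s.toNNReal := by
  rcases hs.eq_or_lt with rfl | hs
  · simp [nu, gaussianReal_zero_var]
  · rw [nu, if_neg hs.ne', integral_gaussianReal_toNNReal hs]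
    congr 2 with x
    rw [sub_sub_eq_add_sub, add_sub_right_comm]

lemma nu_antitone (hf : AntitoneOn f (Set.Ioi 0)) (hs : 0 ≤ s)
    (hint : ∀ m, Integrable (fun x ↦ f (exp x)) (gaussianReal m s.toNNReal)) :
    Antitone fun z ↦ nu f z s := by
  intro z₁ z₂ hz
  simp only [nu_eq_integral_gaussianReal hs]
  exact antitone_integral_gaussianReal_mean
    (fun a b hab ↦ hf (exp_pos a) (exp_pos b) (exp_le_exp.2 hab)) hint (by linarith)

lemma integral_nu_gaussianReal {v : ℝ} (hs : 0 ≤ s) (hv : 0 ≤ v) (z m : ℝ)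
    (hint : Integrable (fun x ↦ f (exp x)) (gaussianReal (z + m - s / 2) (s + v).toNNReal)) :
    ∫ u, nu f (z + u) s ∂gaussianReal m v.toNNReal = nu f (z + m + v / 2) (s + v) := by
  rw [Real.toNNReal_add hs hv, add_sub_right_comm] at hint
  rw [nu_eq_integral_gaussianReal (add_nonneg hs hv), Real.toNNReal_add hs hv,
    show z + m + v / 2 - (s + v) / 2 = z - s / 2 + m by ring,
    ← integral_integral_gaussianReal_add_mean hint]
  simp_rw [nu_eq_integral_gaussianReal hs, add_sub_right_comm]

lemma max_integral_nu_add_sub_gaussianReal (hf : AntitoneOn f (Set.Ioi 0)) {v : ℝ} (hs : 0 ≤ s)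
    (hv : 0 ≤ v) (hint : ∀ m, Integrable (fun x ↦ f (exp x)) (gaussianReal m (s + v).toNNReal))
    (z μ : ℝ) :
    max (∫ u, nu f (z + u) s ∂gaussianReal μ v.toNNReal)
        (∫ u, nu f (z - u) s ∂gaussianReal μ v.toNNReal) =
      nu f (z + v / 2 - |μ|) (s + v) := by
  simp_rw [sub_eq_add_neg z]
  rw [integral_comp_neg_gaussianReal (g := fun u ↦ nu f (z + u) s),
    integral_nu_gaussianReal hs hv _ _ (hint _), integral_nu_gaussianReal hs hv _ _ (hint _),
    add_right_comm z μ, add_right_comm z (-μ), ← sub_eq_add_neg,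
    (nu_antitone hf (add_nonneg hs hv) hint).max_apply_add_apply_sub]

end Nu

theorem mirror_option_value_decreasing_general
    (f : ℝ → ℝ) (hmono : AntitoneOn f (Set.Ioi 0))
    (hint : ∀ z s : ℝ, 0 < s →
      Integrable (fun x : ℝ => f (Real.exp x) * Real.exp (-(x - z + s/2)^2 / (2*s))))
    (σ ε α : ℝ) (hσ : 0 < σ) (hε : 0 < ε)
    (Q : ℕ → ℝ → ℝ)
    (hQ0 : ∀ y, Q 0 y = f (Real.exp y))
    (hQrec : ∀ n y, Q (n+1) y =
      max ((σ * Real.sqrt (2 * Real.pi * ε))⁻¹ *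
             ∫ u : ℝ, Q n (y + u) * Real.exp (-(u - α*ε + σ^2*ε/2)^2 / (2*σ^2*ε)))
          ((σ * Real.sqrt (2 * Real.pi * ε))⁻¹ *
             ∫ u : ℝ, Q n (y - u) * Real.exp (-(u - α*ε + σ^2*ε/2)^2 / (2*σ^2*ε)))) :
    ∀ n : ℕ, ∀ y : ℝ,
      Q n y = nu f (y + (σ^2/2 - |α - σ^2/2|) * (n*ε)) (σ^2 * (n*ε)) := by
  have hv : 0 < σ ^ 2 * ε := by positivity
  have hint_gaussian : ∀ m {s : ℝ}, 0 < s →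
      Integrable (fun x ↦ f (exp x)) (gaussianReal m s.toNNReal) := fun m s hs ↦
    (integrable_gaussianReal_toNNReal_iff hs).2 <| by
      simpa [sub_add_eq_add_sub, sub_add] using hint (m + s / 2) s hs
  have hkernel : ∀ g : ℝ → ℝ, (σ * √(2 * π * ε))⁻¹ *
      ∫ u, g u * exp (-(u - α * ε + σ ^ 2 * ε / 2) ^ 2 / (2 * σ ^ 2 * ε)) =
        ∫ u, g u ∂gaussianReal ((α - σ ^ 2 / 2) * ε) (σ ^ 2 * ε).toNNReal := by
    intro g
    rw [integral_gaussianReal_toNNReal hv, show 2 * π * (σ ^ 2 * ε) = σ ^ 2 * (2 * π * ε) by ring,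
      sqrt_mul (sq_nonneg σ), sqrt_sq hσ.le]
    simp_rw [show ∀ u, u - α * ε + σ ^ 2 * ε / 2 = u - (α - σ ^ 2 / 2) * ε from
      fun u ↦ by ring, mul_assoc 2 (σ ^ 2) ε]
  intro n
  induction n with
  | zero => intro y; simp [hQ0, nu]
  | succ n ih =>
    intro y
    have hshift : ∀ u,
        Q n (y + u) = nu f (y + (σ^2/2 - |α - σ^2/2|) * (n*ε) + u) (σ^2 * (n*ε)) ∧
        Q n (y - u) = nu f (y + (σ^2/2 - |α - σ^2/2|) * (n*ε) - u) (σ^2 * (n*ε)) :=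
      fun u ↦ ⟨by rw [ih]; congr 1; ring, by rw [ih]; congr 1; ring⟩
    rw [hQrec, hkernel, hkernel]
    simp_rw [hshift]
    rw [max_integral_nu_add_sub_gaussianReal hmono (by positivity) hv.le
      (fun m ↦ hint_gaussian m (by positivity)), abs_mul, abs_of_pos hε]
    push_cast
    congr 1 <;> ring

/-- Theorem 1 (decreasing payoff): under the same backward recursion with holder
maximization, `q*₋(nε) = ν(x*_{T-nε} + (σ²/2 - |α - σ²/2|)nε, σ²nε)`. -/
theorem mirror_option_value_decreasing
    (f : ℝ → ℝ) (hmono : AntitoneOn f (Set.Ioi 0))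
    (hint : ∀ z s : ℝ, 0 < s →
      Integrable (fun x : ℝ => f (Real.exp x) * Real.exp (-(x - z + s/2)^2 / (2*s))))
    (σ r δ ε α : ℝ) (hσ : 0 < σ) (hε : 0 < ε) (hα : α = r - δ)
    (Q : ℕ → ℝ → ℝ)
    (hQ0 : ∀ y, Q 0 y = f (Real.exp y))
    (hQrec : ∀ n y, Q (n+1) y =
      max ((σ * Real.sqrt (2 * Real.pi * ε))⁻¹ *
             ∫ u : ℝ, Q n (y + u) * Real.exp (-(u - α*ε + σ^2*ε/2)^2 / (2*σ^2*ε)))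
          ((σ * Real.sqrt (2 * Real.pi * ε))⁻¹ *
             ∫ u : ℝ, Q n (y - u) * Real.exp (-(u - α*ε + σ^2*ε/2)^2 / (2*σ^2*ε)))) :
    ∀ n : ℕ, ∀ y : ℝ,
      Q n y = nu f (y + (σ^2/2 - |α - σ^2/2|) * (n*ε)) (σ^2 * (n*ε)) :=
  mirror_option_value_decreasing_general f hmono hint σ ε α hσ hε Q hQ0 hQrec
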